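/- Let d ≥ 2 and a ∈ L¹(ℝ^d). Suppose the Fourier transform â vanishes on the closed ball of radius 2 centered at the origin, i.e., â(ζ) = 0 for all ζ ∈ ℝ^d with |ζ| ≤ 2. Then the Toeplitz operator with symbol a on the Herglotz space is the zero operator: for all φ, ψ ∈ L²(S^{d-1}), ∫_{ℝ^d} a(x)(Iφ)(x) conj((Iψ)(x)) dx = 0. -/

import Mathlib

open MeasureTheory Filter Metric ComplexConjugate

noncomputable section

/-- Euclidean space ℝ^d. -/
abbrev Ed (d : ℕ) : Type := EuclideanSpace ℝ (Fin d)

/-- The surface measure on the unit sphere S^{d-1} ⊂ ℝ^d, realized as the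
(d-1)-dimensional Hausdorff measure restricted to the sphere. -/
def surf (d : ℕ) : Measure (Ed d) := (μH[(d : ℝ) - 1]).restrict (sphere (0 : Ed d) 1)

/-- The constant c_d = √π / (2π)^{d/2}. -/
def cd (d : ℕ) : ℝ := Real.sqrt Real.pi / (2 * Real.pi) ^ ((d : ℝ) / 2)

/-- The Herglotz wave function Iφ(x) = c_d ∫_{S^{d-1}} φ(ξ) e^{i x·ξ} dS(ξ). -/
def herg (d : ℕ) (φ : Ed d → ℂ) (x : Ed d) : ℂ :=
  (cd d : ℂ) * ∫ ξ, φ ξ * Complex.exp (Complex.I * ((inner ℝ x ξ : ℝ) : ℂ)) ∂(surf d)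

/-- The Fourier transform â(ζ) = (2π)^{-d/2} ∫_{ℝ^d} e^{-i x·ζ} a(x) dx. -/
def ftr (d : ℕ) (a : Ed d → ℂ) (ζ : Ed d) : ℂ :=
  (((2 * Real.pi) ^ (-(d : ℝ) / 2) : ℝ) : ℂ) *
    ∫ x, Complex.exp (-Complex.I * ((inner ℝ x ζ : ℝ) : ℂ)) * a x

/-!
Writing out both Herglotz wave functions and applying Fubini, the Toeplitz form equals
`c_d² ∫∫ φ(ξ) conj(ψ(η)) (2π)^{d/2} â(η - ξ) dS(ξ) dS(η)`, and `|η - ξ| ≤ 2` on the sphere.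
Fubini needs the surface measure to be finite: the sphere is covered by finitely many caps, each
the image of a bounded piece of a hyperplane under the radial projection, which is 2-Lipschitz
outside the unit ball.
-/

open scoped NNReal ENNReal RealInnerProductSpace
open Module

section NormalizeLipschitz

variable {V : Type*} [NormedAddCommGroup V] [NormedSpace ℝ V]

theorem lipschitzOnWith_normalize :
    LipschitzOnWith 2 (NormedSpace.normalize : V → V) {x | 1 ≤ ‖x‖} := by
  refine LipschitzOnWith.of_dist_le_mul fun x hx y hy => ?_
  simp only [Set.mem_ofPred_eq] at hx hy
  have hx0 : 0 < ‖x‖ := one_pos.trans_le hx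
  have hy0 : 0 < ‖y‖ := one_pos.trans_le hy
  rw [dist_eq_norm, dist_eq_norm, NormedSpace.normalize, NormedSpace.normalize]
  have hsplit : ‖x‖⁻¹ • x - ‖y‖⁻¹ • y = ‖x‖⁻¹ • (x - y) + (‖x‖⁻¹ - ‖y‖⁻¹) • y := by
    rw [smul_sub, sub_smul]; abel
  have h₁ : ‖‖x‖⁻¹ • (x - y)‖ ≤ ‖x - y‖ := by
    rw [norm_smul, norm_inv, norm_norm]
    exact mul_le_of_le_one_left (norm_nonneg _) (inv_le_one_of_one_le₀ hx)
  have h₂ : ‖(‖x‖⁻¹ - ‖y‖⁻¹) • y‖ ≤ ‖x - y‖ := by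
    rw [norm_smul, inv_sub_inv hx0.ne' hy0.ne', norm_div, norm_mul, norm_norm, norm_norm,
      div_mul_eq_mul_div, mul_div_mul_right _ _ hy0.ne', Real.norm_eq_abs]
    calc |‖y‖ - ‖x‖| / ‖x‖ ≤ |‖y‖ - ‖x‖| := div_le_self (abs_nonneg _) hx
      _ ≤ ‖x - y‖ := by rw [abs_sub_comm]; exact abs_norm_sub_norm_le x y
  calc ‖‖x‖⁻¹ • x - ‖y‖⁻¹ • y‖ ≤ ‖x - y‖ + ‖x - y‖ :=
        hsplit ▸ (norm_add_le _ _).trans (add_le_add h₁ h₂)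
    _ = (2 : ℝ≥0) * ‖x - y‖ := by push_cast; ring

end NormalizeLipschitz

section SphereHausdorff

variable {E : Type*} [NormedAddCommGroup E] [InnerProductSpace ℝ E] [FiniteDimensional ℝ E]
  [MeasurableSpace E] [BorelSpace E] {n : ℕ}

-- The cap is the radial projection of a bounded piece of the affine hyperplane `v + vᗮ`.
theorem hausdorffMeasure_sphere_inter_lt_top (hn : finrank ℝ E = n + 1) {v : E} (hv : ‖v‖ = 1) :
    μH[(n : ℝ)] (sphere (0 : E) 1 ∩ {x | 1 / 2 < ⟪x, v⟫}) < ⊤ := by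
  have : Fact (finrank ℝ E = n + 1) := ⟨hn⟩
  set K := (ℝ ∙ v)ᗮ
  have hK : finrank ℝ K = n :=
    Submodule.finrank_orthogonal_span_singleton (norm_ne_zero_iff.mp (by simp [hv]))
  set f : K → E := fun y => NormedSpace.normalize ((y : E) + v)
  have hmaps : Set.MapsTo (fun y : K => (y : E) + v) Set.univ {x | 1 ≤ ‖x‖} := by
    intro y _
    have hyv : ⟪(y : E), v⟫ = 0 := by
      rw [real_inner_comm]; exact Submodule.mem_orthogonal_singleton_iff_inner_right.mp y.2
    have := real_inner_le_norm ((y : E) + v) v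
    rw [inner_add_left, hyv, real_inner_self_eq_norm_sq, hv] at this
    simpa [hv] using this
  have hf : LipschitzOnWith (2 * 1) f Set.univ := lipschitzOnWith_normalize.comp
    ((IsometryEquiv.addRight v).isometry.comp isometry_subtype_coe).lipschitz.lipschitzOnWith hmaps
  have hcover : sphere (0 : E) 1 ∩ {x | 1 / 2 < ⟪x, v⟫} ⊆ f '' closedBall 0 3 := by
    rintro x ⟨hx, hxv⟩
    rw [mem_sphere_zero_iff_norm] at hx
    simp only [Set.mem_ofPred_eq] at hxv
    have ht : 0 < ⟪x, v⟫ := by linarith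
    have hy : ⟪x, v⟫⁻¹ • x - v ∈ K := by
      rw [Submodule.mem_orthogonal_singleton_iff_inner_right, inner_sub_right, inner_smul_right,
        real_inner_comm x v, inv_mul_cancel₀ ht.ne', real_inner_self_eq_norm_sq, hv]
      norm_num
    refine ⟨⟨_, hy⟩, ?_, ?_⟩
    · rw [mem_closedBall, dist_zero_right, Submodule.coe_norm]
      calc ‖⟪x, v⟫⁻¹ • x - v‖ ≤ ‖⟪x, v⟫⁻¹ • x‖ + ‖v‖ := norm_sub_le _ _
        _ ≤ 3 := by
          rw [norm_smul, hx, hv, mul_one, Real.norm_eq_abs, abs_inv, abs_of_pos ht]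
          have : ⟪x, v⟫⁻¹ < 2 := by rw [inv_lt_comm₀ ht two_pos]; linarith
          linarith
    · simp only [f, sub_add_cancel]
      rw [NormedSpace.normalize_smul_of_pos (inv_pos.mpr ht),
        NormedSpace.normalize_eq_self_of_norm_eq_one hx]
  calc μH[(n : ℝ)] (sphere (0 : E) 1 ∩ {x | 1 / 2 < ⟪x, v⟫})
      ≤ μH[(n : ℝ)] (f '' closedBall 0 3) := measure_mono hcover
    _ ≤ (2 * 1 : ℝ≥0) ^ (n : ℝ) * μH[(n : ℝ)] (closedBall (0 : K) 3) :=
        (hf.mono (Set.subset_univ _)).hausdorffMeasure_image_le n.cast_nonneg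
    _ < ⊤ := by
        refine ENNReal.mul_lt_top (by simp) ?_
        rw [← hK]
        exact (isCompact_closedBall _ _).measure_lt_top

theorem hausdorffMeasure_sphere_lt_top (hn : finrank ℝ E = n + 1) :
    μH[(n : ℝ)] (sphere (0 : E) 1) < ⊤ := by
  obtain ⟨caps, hcaps, hfin, hcover⟩ := (isCompact_sphere (0 : E) 1).elim_finite_subcover_image
    (c := fun v => {x | 1 / 2 < ⟪x, v⟫})
    (fun v _ => isOpen_lt continuous_const (continuous_id.inner continuous_const))
    (fun x hx => Set.mem_biUnion hx (by simp_all; norm_num))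
  refine (measure_mono (Set.subset_inter_iff.mpr ⟨le_rfl, hcover⟩)).trans_lt ?_
  rw [Set.inter_iUnion₂]
  exact measure_biUnion_lt_top hfin fun v hv =>
    hausdorffMeasure_sphere_inter_lt_top hn (by simpa using hcaps hv)

end SphereHausdorff

section PlaneWaves

open Complex

variable {E : Type*} [NormedAddCommGroup E] [InnerProductSpace ℝ E]

theorem exp_I_inner_mul_conj_exp_I_inner (x ξ η : E) :
    exp (I * ⟪x, ξ⟫) * conj (exp (I * ⟪x, η⟫)) = exp (-I * ⟪x, η - ξ⟫) := by
  rw [← exp_conj, ← exp_add, map_mul, conj_I, conj_ofReal, inner_sub_right]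
  push_cast
  ring_nf

variable [MeasurableSpace E] [BorelSpace E] [SecondCountableTopology E]

theorem integral_mul_integral_mul_conj_integral (μ ν : Measure E) [SFinite μ] [IsFiniteMeasure ν]
    {a φ ψ : E → ℂ} (ha : Integrable a μ) (hφ : Integrable φ ν) (hψ : Integrable ψ ν) :
    ∫ x, a x * (∫ ξ, φ ξ * exp (I * ⟪x, ξ⟫) ∂ν) * conj (∫ η, ψ η * exp (I * ⟪x, η⟫) ∂ν) ∂μ =
      ∫ p, φ p.1 * conj (ψ p.2) * (∫ x, exp (-I * ⟪x, p.2 - p.1⟫) * a x ∂μ) ∂ν.prod ν := by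
  set F : E → E × E → ℂ := fun x p => φ p.1 * conj (ψ p.2) * (exp (-I * ⟪x, p.2 - p.1⟫) * a x)
  have hψc : Integrable (fun η => conj (ψ η)) ν :=
    Complex.conjCLE.toContinuousLinearMap.integrable_comp hψ
  have hF : Integrable (Function.uncurry F) (μ.prod (ν.prod ν)) := by
    have hwave : Continuous fun z : E × E × E => exp (-I * ⟪z.1, z.2.2 - z.2.1⟫) := by fun_prop
    refine (ha.mul_prod (hφ.mul_prod hψc)).bdd_mul (c := 1) hwave.aestronglyMeasurable
      (Eventually.of_forall fun z => ?_) |>.congr (Eventually.of_forall fun z => ?_)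
    · rw [norm_exp]; simp
    · simp only [F, Function.uncurry]; ring
  have hpoint : ∀ x, a x * (∫ ξ, φ ξ * exp (I * ⟪x, ξ⟫) ∂ν) *
      conj (∫ η, ψ η * exp (I * ⟪x, η⟫) ∂ν) = ∫ p, F x p ∂ν.prod ν := by
    intro x
    rw [← integral_conj, mul_assoc, ← integral_prod_mul, ← integral_const_mul]
    refine integral_congr_ae (Eventually.of_forall fun p => ?_)
    simp only [F, map_mul, ← exp_I_inner_mul_conj_exp_I_inner]
    ring
  simp_rw [hpoint]
  rw [integral_integral_swap hF]
  simp only [F, integral_const_mul]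

end PlaneWaves

theorem ae_norm_eq_one_surf (d : ℕ) : ∀ᵐ ξ ∂surf d, ‖ξ‖ = 1 :=
  (ae_restrict_mem isClosed_sphere.measurableSet).mono fun _ => mem_sphere_zero_iff_norm.mp

instance isFiniteMeasure_surf (d : ℕ) : IsFiniteMeasure (surf d) := by
  rw [surf, isFiniteMeasure_restrict]
  rcases d with _ | n
  · simp [sphere_eq_empty_of_subsingleton one_ne_zero]
  · have h := hausdorffMeasure_sphere_lt_top (E := Ed (n + 1)) (n := n) (by simp)
    push_cast
    simpa using h.ne

theorem ftr_eq_zero_iff (d : ℕ) (a : Ed d → ℂ) (ζ : Ed d) :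
    ftr d a ζ = 0 ↔ ∫ x, Complex.exp (-Complex.I * ⟪x, ζ⟫) * a x = 0 := by
  rw [ftr, mul_eq_zero, or_iff_right]
  exact_mod_cast (Real.rpow_pos_of_pos (by positivity) _).ne'

theorem statement3_general (d : ℕ) (a : Ed d → ℂ) (ha : Integrable a)
    (hvanish : ∀ ζ : Ed d, ‖ζ‖ ≤ 2 → ftr d a ζ = 0)
    (φ ψ : Ed d → ℂ) (hφ : MemLp φ 2 (surf d)) (hψ : MemLp ψ 2 (surf d)) :
    ∫ x, a x * herg d φ x * conj (herg d ψ x) = 0 := by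
  have hsphere : ∀ᵐ p ∂(surf d).prod (surf d), ‖p.2 - p.1‖ ≤ 2 := by
    filter_upwards [Measure.quasiMeasurePreserving_fst.ae (ae_norm_eq_one_surf d),
      Measure.quasiMeasurePreserving_snd.ae (ae_norm_eq_one_surf d)] with p h₁ h₂
    exact (norm_sub_le _ _).trans (by rw [h₁, h₂]; norm_num)
  calc ∫ x, a x * herg d φ x * conj (herg d ψ x)
      = (cd d : ℂ) ^ 2 * ∫ x, a x * (∫ ξ, φ ξ * Complex.exp (Complex.I * ⟪x, ξ⟫) ∂surf d) *
          conj (∫ η, ψ η * Complex.exp (Complex.I * ⟪x, η⟫) ∂surf d) := by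
        rw [← integral_const_mul]
        simp only [herg, map_mul, Complex.conj_ofReal]
        congr 1 with x
        ring
    _ = (cd d : ℂ) ^ 2 * ∫ p, φ p.1 * conj (ψ p.2) *
          (∫ x, Complex.exp (-Complex.I * ⟪x, p.2 - p.1⟫) * a x) ∂(surf d).prod (surf d) := by
        rw [integral_mul_integral_mul_conj_integral _ _ ha (hφ.integrable one_le_two)
          (hψ.integrable one_le_two)]
    _ = 0 := by
        rw [integral_eq_zero_of_ae, mul_zero]
        filter_upwards [hsphere] with p hp
        rw [(ftr_eq_zero_iff d a _).mp (hvanish _ hp), mul_zero, Pi.zero_apply]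

/-- if â vanishes on the closed ball of radius 2, the Toeplitz
operator with symbol a on the Herglotz space is zero. -/
theorem statement3 (d : ℕ) (hd : 2 ≤ d) (a : Ed d → ℂ) (ha : Integrable a)
    (hvanish : ∀ ζ : Ed d, ‖ζ‖ ≤ 2 → ftr d a ζ = 0)
    (φ ψ : Ed d → ℂ) (hφ : MemLp φ 2 (surf d)) (hψ : MemLp ψ 2 (surf d)) :
    ∫ x, a x * herg d φ x * conj (herg d ψ x) = 0 :=
  statement3_general d a ha hvanish φ ψ hφ hψ
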